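/- Let d ≥ 1, ρ ∈ (0,1), W > 0, and t ≥ 1. Let F̃, G ∈ ℝ^{d×d}. For 0 ≤ k ≤ t−1 and 1 ≤ s ≤ k+1, let Z_k^{[s]} ∈ ℝ^{d×d} be arbitrary matrices and w_{k−s} ∈ ℝ^d vectors with ‖w_j‖₂ ≤ W for all j. Define weights ξ_0 = ξ_1 = ξ_2 = 1 and ξ_j = ρ^{−(j−2)/2} for j ≥ 3. Then there is an absolute constant C > 0 such that ‖ Σ_{k=0}^{t−1} Σ_{s=1}^{k+1} F̃^{t−k−1} G Z_k^{[s]} w_{k−s} ‖₂ ≤ C · W (1−ρ)^{−1} · ( Σ_{k=0}^{t−1} ξ_{t−k}² Σ_{s=1}^{k+1} ρ^{−s} ‖F̃^{t−k−1} G Z_k^{[s]}‖_F² )^{1/2}. -/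

import Mathlib

/-!
Bound each summand by `W ‖F̃^{t-k-1} G Z_k^{[s]}‖_F` (triangle inequality and Cauchy–Schwarz
row by row), then apply Cauchy–Schwarz to the double sum with weights
`b_{k,s} = ρ^{t-k-2} ρ^s`, chosen so that `b_{k,s}⁻¹ = ξ_{t-k}² ρ^{-s}`. The weights form a
product of two geometric series, so `∑ b_{k,s} ≤ (1-ρ)^{-2}`, which gives the claim with `C = 1`.
-/

/-- A square matrix acting on Euclidean space. -/
noncomputable def mv14 {d : ℕ} (M : Matrix (Fin d) (Fin d) ℝ) (v : EuclideanSpace ℝ (Fin d)) :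
    EuclideanSpace ℝ (Fin d) :=
  Matrix.toEuclideanCLM (𝕜 := ℝ) M v

/-- Frobenius norm of a real square matrix. -/
noncomputable def frob14 {d : ℕ} (M : Matrix (Fin d) (Fin d) ℝ) : ℝ :=
  Real.sqrt (∑ i, ∑ j, (M i j) ^ 2)

/-- The weights `ξ_0 = ξ_1 = ξ_2 = 1` and `ξ_j = ρ^{−(j−2)/2}` for `j ≥ 3`. -/
noncomputable def xiw14 (ρ : ℝ) (j : ℕ) : ℝ := (Real.sqrt ρ ^ (j - 2))⁻¹

open Finset

lemma frob14_nonneg {d : ℕ} (M : Matrix (Fin d) (Fin d) ℝ) : 0 ≤ frob14 M :=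
  Real.sqrt_nonneg _

lemma mv14_apply {d : ℕ} (M : Matrix (Fin d) (Fin d) ℝ) (v : EuclideanSpace ℝ (Fin d))
    (i : Fin d) : mv14 M v i = ∑ j, M i j * v j :=
  rfl

lemma norm_mv14_le {d : ℕ} (M : Matrix (Fin d) (Fin d) ℝ) (v : EuclideanSpace ℝ (Fin d)) :
    ‖mv14 M v‖ ≤ frob14 M * ‖v‖ := by
  have hv : ‖v‖ ^ 2 = ∑ j, v j ^ 2 := by
    simp only [EuclideanSpace.norm_sq_eq, Real.norm_eq_abs, sq_abs]
  have hsq : ‖mv14 M v‖ ^ 2 ≤ (frob14 M * ‖v‖) ^ 2 := by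
    rw [EuclideanSpace.norm_sq_eq, mul_pow, frob14, Real.sq_sqrt (by positivity), sum_mul]
    refine sum_le_sum fun i _ => ?_
    rw [Real.norm_eq_abs, sq_abs, hv, mv14_apply]
    exact sum_mul_sq_le_sq_mul_sq _ (M i) v
  exact (pow_le_pow_iff_left₀ (norm_nonneg _)
    (mul_nonneg (frob14_nonneg M) (norm_nonneg v)) two_ne_zero).mp hsq

lemma norm_sum_mv14_le {ι : Type*} {d : ℕ} (s : Finset ι) (M : ι → Matrix (Fin d) (Fin d) ℝ)
    (v : ι → EuclideanSpace ℝ (Fin d)) {W : ℝ} (hv : ∀ i ∈ s, ‖v i‖ ≤ W) :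
    ‖∑ i ∈ s, mv14 (M i) (v i)‖ ≤ W * ∑ i ∈ s, frob14 (M i) := by
  rw [mul_sum]
  refine (norm_sum_le _ _).trans (sum_le_sum fun i hi => ?_)
  calc ‖mv14 (M i) (v i)‖ ≤ frob14 (M i) * ‖v i‖ := norm_mv14_le _ _
    _ ≤ frob14 (M i) * W := mul_le_mul_of_nonneg_left (hv i hi) (frob14_nonneg _)
    _ = W * frob14 (M i) := mul_comm _ _

lemma sq_xiw14 {ρ : ℝ} (hρ : 0 ≤ ρ) (j : ℕ) : xiw14 ρ j ^ 2 = (ρ ^ (j - 2))⁻¹ := by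
  rw [xiw14, inv_pow, ← pow_mul, mul_comm, pow_mul, Real.sq_sqrt hρ]

lemma Finset.sum_le_mul_sqrt_sum_sq_div {ι : Type*} (s : Finset ι) (a : ι → ℝ) {b : ι → ℝ}
    (hb : ∀ i ∈ s, 0 < b i) {B : ℝ} (hB : 0 ≤ B) (hsum : ∑ i ∈ s, b i ≤ B ^ 2) :
    ∑ i ∈ s, a i ≤ B * √(∑ i ∈ s, a i ^ 2 / b i) := by
  have hQ : 0 ≤ ∑ i ∈ s, a i ^ 2 / b i :=
    sum_nonneg fun i hi => div_nonneg (sq_nonneg _) (hb i hi).le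
  rw [← Real.sqrt_sq hB, ← Real.sqrt_mul (sq_nonneg B)]
  refine Real.le_sqrt_of_sq_le ?_
  calc (∑ i ∈ s, a i) ^ 2 ≤ (∑ i ∈ s, b i) * ∑ i ∈ s, a i ^ 2 / b i :=
        sum_sq_le_sum_mul_sum_of_sq_le_mul s (fun i hi => (hb i hi).le)
          (fun i hi => div_nonneg (sq_nonneg _) (hb i hi).le)
          (fun i hi => (mul_div_cancel₀ _ (hb i hi).ne').ge)
    _ ≤ B ^ 2 * ∑ i ∈ s, a i ^ 2 / b i := mul_le_mul_of_nonneg_right hsum hQ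

lemma geom_sum_range_le_of_lt_one {ρ : ℝ} (h0 : 0 ≤ ρ) (h1 : ρ < 1) (n : ℕ) :
    ∑ i ∈ range n, ρ ^ i ≤ (1 - ρ)⁻¹ := by
  have h := geom_sum_Ico_le_of_lt_one (m := 0) (n := n) h0 h1
  rwa [pow_zero, one_div, ← range_eq_Ico] at h

lemma sum_pow_mul_sum_Icc_pow_le {ρ : ℝ} (h0 : 0 ≤ ρ) (h1 : ρ < 1) (t : ℕ) :
    ∑ k ∈ range t, ρ ^ (t - k - 2) * ∑ s ∈ Icc 1 (k + 1), ρ ^ s ≤ ((1 - ρ)⁻¹) ^ 2 := by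
  have h1ρ : 0 < 1 - ρ := by linarith
  have hterm : ∀ k ∈ range t,
      ρ ^ (t - k - 2) * ∑ s ∈ Icc 1 (k + 1), ρ ^ s ≤ ρ ^ (t - 1 - k) * (1 - ρ)⁻¹ := by
    intro k _
    have hinner : ∑ s ∈ Icc 1 (k + 1), ρ ^ s ≤ ρ / (1 - ρ) := by
      have h := geom_sum_Ico_le_of_lt_one (m := 1) (n := k + 1 + 1) h0 h1
      rwa [pow_one, Ico_add_one_right_eq_Icc] at h
    calc ρ ^ (t - k - 2) * ∑ s ∈ Icc 1 (k + 1), ρ ^ s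
        ≤ ρ ^ (t - k - 2) * (ρ / (1 - ρ)) := by gcongr
      _ = ρ ^ (t - k - 2 + 1) * (1 - ρ)⁻¹ := by rw [pow_succ]; ring
      _ ≤ ρ ^ (t - 1 - k) * (1 - ρ)⁻¹ := by
        -- strict only for `k = t - 1`, where `t - k - 2` truncates to `0`
        have hexp : t - 1 - k ≤ t - k - 2 + 1 := by omega
        exact mul_le_mul_of_nonneg_right (pow_le_pow_of_le_one h0 h1.le hexp)
          (inv_nonneg.mpr h1ρ.le)
  calc ∑ k ∈ range t, ρ ^ (t - k - 2) * ∑ s ∈ Icc 1 (k + 1), ρ ^ s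
      ≤ ∑ k ∈ range t, ρ ^ (t - 1 - k) * (1 - ρ)⁻¹ := sum_le_sum hterm
    _ = (∑ j ∈ range t, ρ ^ j) * (1 - ρ)⁻¹ := by
        rw [← sum_mul, sum_range_reflect (fun j => ρ ^ j) t]
    _ ≤ (1 - ρ)⁻¹ * (1 - ρ)⁻¹ := by
        gcongr
        exact geom_sum_range_le_of_lt_one h0 h1 t
    _ = ((1 - ρ)⁻¹) ^ 2 := (sq _).symm

/-- key Cauchy–Schwarz step for the Lipschitz constant in online linear
control.  Here `w j` encodes the disturbance `w_{j−1}`, so `w_{k−s} = w (k+1−s)`.  There is an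
absolute constant `C > 0` such that for arbitrary matrices `Z_k^{[s]}` and disturbances of norm
at most `W`,
`‖∑_{k<t} ∑_{s=1}^{k+1} F̃^{t−k−1} G Z_k^{[s]} w_{k−s}‖₂
  ≤ C W (1−ρ)^{−1} (∑_{k<t} ξ_{t−k}² ∑_{s=1}^{k+1} ρ^{−s} ‖F̃^{t−k−1} G Z_k^{[s]}‖_F²)^{1/2}`. -/
theorem stmt_14 : ∃ C > (0:ℝ),
    ∀ (d t : ℕ) (ρ W : ℝ), 1 ≤ d → 1 ≤ t → ρ ∈ Set.Ioo (0:ℝ) 1 → 0 < W →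
    ∀ (Ftil G : Matrix (Fin d) (Fin d) ℝ)
      (Z : ℕ → ℕ → Matrix (Fin d) (Fin d) ℝ)
      (w : ℕ → EuclideanSpace ℝ (Fin d)), (∀ j, ‖w j‖ ≤ W) →
      ‖∑ k ∈ Finset.range t, ∑ s ∈ Finset.Icc 1 (k + 1),
          mv14 (Ftil ^ (t - k - 1) * (G * Z k s)) (w (k + 1 - s))‖
        ≤ C * W * (1 - ρ)⁻¹ *
            Real.sqrt (∑ k ∈ Finset.range t, xiw14 ρ (t - k) ^ 2 *
              ∑ s ∈ Finset.Icc 1 (k + 1),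
                (ρ ^ s)⁻¹ * frob14 (Ftil ^ (t - k - 1) * (G * Z k s)) ^ 2) := by
  refine ⟨1, one_pos, fun d t ρ W _ _ ⟨hρ0, hρ1⟩ hW Ftil G Z w hw => ?_⟩
  set A : ℕ → ℕ → Matrix (Fin d) (Fin d) ℝ := fun k s => Ftil ^ (t - k - 1) * (G * Z k s)
  set S := (range t).sigma fun k => Icc 1 (k + 1)
  have htri : ‖∑ k ∈ range t, ∑ s ∈ Icc 1 (k + 1), mv14 (A k s) (w (k + 1 - s))‖
      ≤ W * ∑ p ∈ S, frob14 (A p.1 p.2) := by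
    rw [sum_sigma']
    exact norm_sum_mv14_le S _ _ fun p _ => hw _
  have hweights : ∑ p ∈ S, ρ ^ (t - p.1 - 2) * ρ ^ p.2 ≤ ((1 - ρ)⁻¹) ^ 2 := by
    simpa only [mul_sum, sum_sigma'] using sum_pow_mul_sum_Icc_pow_le hρ0.le hρ1 t
  have hcs := S.sum_le_mul_sqrt_sum_sq_div (fun p => frob14 (A p.1 p.2))
    (fun p _ => by positivity) (inv_nonneg.mpr (sub_pos.mpr hρ1).le) hweights
  have hQ : ∑ p ∈ S, frob14 (A p.1 p.2) ^ 2 / (ρ ^ (t - p.1 - 2) * ρ ^ p.2)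
      = ∑ k ∈ range t, xiw14 ρ (t - k) ^ 2 *
          ∑ s ∈ Icc 1 (k + 1), (ρ ^ s)⁻¹ * frob14 (A k s) ^ 2 := by
    simp only [mul_sum, sq_xiw14 hρ0.le, sum_sigma']
    refine sum_congr rfl fun p _ => ?_
    ring
  rw [hQ] at hcs
  calc _ ≤ W * ∑ p ∈ S, frob14 (A p.1 p.2) := htri
    _ ≤ _ := by rw [one_mul, mul_assoc]; exact mul_le_mul_of_nonneg_left hcs hW.le
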